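/- Let V ∈ ℝ_{≥0}^{n×m} with m mod n = 0 and no ties within any row of V. Then SoftRR_τ(V) converges entrywise as τ → 0⁺ to the allocation matrix output by round robin RR(V). -/

import Mathlib

open Finset

/-- Tie-breaking argmax: the smallest index in `C` attaining the maximum of `v` on `C`. -/
noncomputable def pickTB (v : ℕ → ℝ) (C : Finset ℕ) : ℕ :=
  if h : (C.filter fun j => ∀ j' ∈ C, v j' ≤ v j).Nonempty
  then (C.filter fun j => ∀ j' ∈ C, v j' ≤ v j).min' h
  else 0

/-- softmax over goods `0, ..., m-1`. -/
noncomputable def softmaxOn (m : ℕ) (z : ℕ → ℝ) (j : ℕ) : ℝ :=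
  Real.exp (z j) / ∑ j' ∈ Finset.range m, Real.exp (z j')

/-- minimum entry of a row over goods `0, ..., m-1`. -/
noncomputable def rowMin (m : ℕ) (vi : ℕ → ℝ) : ℝ :=
  if h : (Finset.range m).Nonempty then (Finset.range m).inf' h vi else 0

/-- State of the soft one-round algorithm `sr_τ` after `i` iterations:
`(y^{(i)}, c^{(i)})`, where `c^{(0)} = 1`, and at iteration `i+1` (agent `i`, 0-indexed)
`y = softmax(((V[i] − min(V[i])·1 + 1) ⊙ c)/τ)` and `c ← (1 − y) ⊙ c`. -/
noncomputable def srState (τ : ℝ) (v : ℕ → ℕ → ℝ) (m : ℕ) : ℕ → (ℕ → ℝ) × (ℕ → ℝ)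
  | 0 => (fun _ => 0, fun _ => 1)
  | i + 1 =>
    let c := (srState τ v m i).2
    let y := softmaxOn m fun j => (v i j - rowMin m (v i) + 1) * c j / τ
    (y, fun j => (1 - y j) * c j)

/-- Row `i` (0-indexed) of the output matrix `R` of the soft one-round algorithm. -/
noncomputable def srOut (τ : ℝ) (v : ℕ → ℕ → ℝ) (m : ℕ) (i : ℕ) : ℕ → ℝ :=
  (srState τ v m (i + 1)).1

/-- Remaining goods `C_i` in the exact one-round procedure (0-indexed: `C 0 = [m]`). -/
noncomputable def oneRoundC (v : ℕ → ℕ → ℝ) (m : ℕ) : ℕ → Finset ℕ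
  | 0 => Finset.range m
  | i + 1 => (oneRoundC v m i).erase (pickTB (v i) (oneRoundC v m i))

/-- Output matrix of the exact one-round procedure: `r(V)_{ij} = 1` iff agent `i`
picks good `j` (the maximizer of `v i` over `C_i`). -/
noncomputable def oneRoundMat (v : ℕ → ℕ → ℝ) (m : ℕ) (i j : ℕ) : ℝ :=
  if j = pickTB (v i) (oneRoundC v m i) then 1 else 0

/-- Remaining goods before turn `t` of round robin; at turn `t` agent `t % n` picks. -/
noncomputable def rrRem (v : ℕ → ℕ → ℝ) (n m : ℕ) : ℕ → Finset ℕ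
  | 0 => Finset.range m
  | t + 1 => (rrRem v n m t).erase (pickTB (v (t % n)) (rrRem v n m t))

/-- The good picked at turn `t` of round robin. -/
noncomputable def rrPickAt (v : ℕ → ℕ → ℝ) (n m t : ℕ) : ℕ :=
  pickTB (v (t % n)) (rrRem v n m t)

/-- The bundle allocated to agent `i` by round robin. -/
noncomputable def rrBundle (v : ℕ → ℕ → ℝ) (n m i : ℕ) : Finset ℕ :=
  ((Finset.range m).filter fun t => t % n = i).image (rrPickAt v n m)

open Filter Topology

/-!
Running round robin on `V` is the same as running the exact one-round procedure `r` on the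
matrix whose row `t` is `V[t % n]`, so it suffices that `sr_τ` converges to `r` row by row.
This goes by induction over the agents: once the capacities `c` tend to the indicator of the
remaining goods `C_t`, the logits `(V[t] − min V[t] + 1) ⊙ c` have limits strictly maximised
at agent `t`'s favourite good in `C_t`, so after division by `τ → 0⁺` the softmax concentrates
on that good, and the capacities tend to the indicator of `C_{t+1}`.
-/

lemma pickTB_mem_filter (w : ℕ → ℝ) {C : Finset ℕ} (hC : C.Nonempty) :
    pickTB w C ∈ C.filter fun j => ∀ j' ∈ C, w j' ≤ w j := by
  obtain ⟨a, ha, hmax⟩ := C.exists_max_image w hC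
  have hne : (C.filter fun j => ∀ j' ∈ C, w j' ≤ w j).Nonempty := ⟨a, mem_filter.2 ⟨ha, hmax⟩⟩
  rw [pickTB, dif_pos hne]
  exact min'_mem _ hne

lemma pickTB_mem (w : ℕ → ℝ) {C : Finset ℕ} (hC : C.Nonempty) : pickTB w C ∈ C :=
  (mem_filter.1 (pickTB_mem_filter w hC)).1

lemma le_pickTB (w : ℕ → ℝ) {C : Finset ℕ} (hC : C.Nonempty) {j : ℕ} (hj : j ∈ C) :
    w j ≤ w (pickTB w C) :=
  (mem_filter.1 (pickTB_mem_filter w hC)).2 j hj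

lemma rowMin_le (w : ℕ → ℝ) {m j : ℕ} (hj : j < m) : rowMin m w ≤ w j := by
  rw [rowMin, dif_pos ⟨j, mem_range.2 hj⟩]
  exact inf'_le _ (mem_range.2 hj)

section Softmax

variable {α : Type*} {l : Filter α} {m p : ℕ} {s : ℕ → α → ℝ}

lemma softmaxOn_eq_inv_sum_exp_sub (z : ℕ → ℝ) (j : ℕ) :
    softmaxOn m z j = (∑ j' ∈ range m, Real.exp (z j' - z j))⁻¹ := by
  have h : ∑ j' ∈ range m, Real.exp (z j')
      = Real.exp (z j) * ∑ j' ∈ range m, Real.exp (z j' - z j) := by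
    rw [mul_sum]
    exact sum_congr rfl fun j' _ => by rw [← Real.exp_add, add_sub_cancel]
  rw [softmaxOn, h, div_mul_eq_div_div, div_self (Real.exp_ne_zero _), one_div]

lemma tendsto_softmaxOn_self_of_gap (hp : p < m)
    (hgap : ∀ j < m, j ≠ p → Tendsto (fun x => s j x - s p x) l atBot) :
    Tendsto (fun x => softmaxOn m (fun j => s j x) p) l (𝓝 1) := by
  have hsum : Tendsto (fun x => ∑ j ∈ range m, Real.exp (s j x - s p x)) l
      (𝓝 (∑ j ∈ range m, if j = p then (1 : ℝ) else 0)) := by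
    refine tendsto_finsetSum _ fun j hj => ?_
    by_cases hjp : j = p
    · subst hjp
      simpa using tendsto_const_nhds
    · rw [if_neg hjp]
      exact Real.tendsto_exp_atBot.comp (hgap j (mem_range.1 hj) hjp)
  rw [sum_ite_eq' _ _ (fun _ => (1 : ℝ)), if_pos (mem_range.2 hp)] at hsum
  simpa only [softmaxOn_eq_inv_sum_exp_sub, inv_one] using hsum.inv₀ one_ne_zero

lemma tendsto_softmaxOn_of_gap (hp : p < m) {j : ℕ}
    (hgap : Tendsto (fun x => s j x - s p x) l atBot) :
    Tendsto (fun x => softmaxOn m (fun j' => s j' x) j) l (𝓝 0) := by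
  have hnonneg : ∀ x, 0 ≤ softmaxOn m (fun j' => s j' x) j := fun x =>
    div_nonneg (Real.exp_nonneg _) (sum_nonneg fun _ _ => Real.exp_nonneg _)
  -- the denominator is at least its `p`-th term
  have hle : ∀ x, softmaxOn m (fun j' => s j' x) j ≤ Real.exp (s j x - s p x) := fun x => by
    rw [softmaxOn, Real.exp_sub]
    exact div_le_div_of_nonneg_left (Real.exp_nonneg _) (Real.exp_pos _)
      (single_le_sum (f := fun j' => Real.exp (s j' x)) (fun _ _ => Real.exp_nonneg _)
        (mem_range.2 hp))
  exact tendsto_of_tendsto_of_tendsto_of_le_of_le tendsto_const_nhds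
    (Real.tendsto_exp_atBot.comp hgap) hnonneg hle

lemma tendsto_softmaxOn_div_nhdsGT {z : ℕ → ℝ → ℝ} {L : ℕ → ℝ} (hp : p < m)
    (hz : ∀ j < m, Tendsto (z j) (𝓝[>] 0) (𝓝 (L j))) (hL : ∀ j < m, j ≠ p → L j < L p)
    {j : ℕ} (hj : j < m) :
    Tendsto (fun τ => softmaxOn m (fun j' => z j' τ / τ) j) (𝓝[>] 0)
      (𝓝 (if j = p then 1 else 0)) := by
  have hgap : ∀ j < m, j ≠ p →
      Tendsto (fun τ => z j τ / τ - z p τ / τ) (𝓝[>] 0) atBot := fun j hj hjp => by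
    refine (Tendsto.neg_mul_atTop (sub_neg.2 (hL j hj hjp)) ((hz j hj).sub (hz p hp))
      tendsto_inv_nhdsGT_zero).congr fun τ => ?_
    ring
  split_ifs with hjp
  · subst hjp
    exact tendsto_softmaxOn_self_of_gap (s := fun j τ => z j τ / τ) hp hgap
  · exact tendsto_softmaxOn_of_gap (s := fun j τ => z j τ / τ) hp (hgap j hj hjp)

end Softmax

section OneRound

variable {v : ℕ → ℕ → ℝ} {m : ℕ}

lemma oneRoundC_subset_range : ∀ t, oneRoundC v m t ⊆ range m
  | 0 => Subset.refl _
  | t + 1 => (erase_subset _ _).trans (oneRoundC_subset_range t)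

lemma oneRoundC_antitone : Antitone (oneRoundC v m) :=
  antitone_nat_of_succ_le fun _ => erase_subset _ _

lemma card_oneRoundC : ∀ t ≤ m, (oneRoundC v m t).card = m - t
  | 0, _ => by simp [oneRoundC]
  | t + 1, ht => by
    have ih := card_oneRoundC t (by omega)
    have hne : (oneRoundC v m t).Nonempty := by
      rw [← card_pos, ih]
      omega
    rw [oneRoundC, card_erase_of_mem (pickTB_mem _ hne), ih]
    omega

lemma oneRoundC_nonempty {t : ℕ} (ht : t < m) : (oneRoundC v m t).Nonempty := by
  rw [← card_pos, card_oneRoundC t ht.le]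
  omega

lemma pickTB_oneRoundC_lt {t : ℕ} (ht : t < m) : pickTB (v t) (oneRoundC v m t) < m :=
  mem_range.1 (oneRoundC_subset_range t (pickTB_mem _ (oneRoundC_nonempty ht)))

lemma pickTB_oneRoundC_injOn :
    Set.InjOn (fun t => pickTB (v t) (oneRoundC v m t)) (Set.Iio m) := by
  -- a good picked at turn `t₁` is no longer available at any later turn `t₂`
  have hne : ∀ {t₁ t₂}, t₁ < t₂ → t₂ < m →
      pickTB (v t₁) (oneRoundC v m t₁) ≠ pickTB (v t₂) (oneRoundC v m t₂) := by
    intro t₁ t₂ h₁₂ h₂ heq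
    have hmem : pickTB (v t₂) (oneRoundC v m t₂) ∈ oneRoundC v m (t₁ + 1) :=
      oneRoundC_antitone h₁₂ (pickTB_mem _ (oneRoundC_nonempty h₂))
    exact ne_of_mem_erase hmem heq.symm
  intro t₁ ht₁ t₂ ht₂ heq
  rcases lt_trichotomy t₁ t₂ with h | h | h
  · exact absurd heq (hne h ht₂)
  · exact h
  · exact absurd heq.symm (hne h ht₁)

lemma ite_mem_oneRoundC_succ (t j : ℕ) :
    (if j ∈ oneRoundC v m (t + 1) then (1 : ℝ) else 0)
      = (1 - oneRoundMat v m t j) * if j ∈ oneRoundC v m t then 1 else 0 := by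
  by_cases h₁ : j = pickTB (v t) (oneRoundC v m t) <;>
    by_cases h₂ : j ∈ oneRoundC v m t <;>
    simp [oneRoundC, oneRoundMat, h₁, h₂]

lemma tendsto_srState_fst_succ {t : ℕ} (ht : t < m)
    (hties : ∀ j < m, ∀ j' < m, j ≠ j' → v t j ≠ v t j')
    (hc : ∀ j < m, Tendsto (fun τ => (srState τ v m t).2 j) (𝓝[>] 0)
      (𝓝 (if j ∈ oneRoundC v m t then 1 else 0)))
    {j : ℕ} (hj : j < m) :
    Tendsto (fun τ => (srState τ v m (t + 1)).1 j) (𝓝[>] 0) (𝓝 (oneRoundMat v m t j)) := by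
  set C := oneRoundC v m t
  set p := pickTB (v t) C
  set a : ℕ → ℝ := fun j => v t j - rowMin m (v t) + 1
  have hC : C.Nonempty := oneRoundC_nonempty ht
  have hp : p < m := pickTB_oneRoundC_lt ht
  have hpC : (if p ∈ C then (1 : ℝ) else 0) = 1 := if_pos (pickTB_mem _ hC)
  -- the shifted values are at least `1`, so goods already taken lose to every remaining one
  have hap : 1 ≤ a p := by linarith [rowMin_le (v t) hp]
  have hL : ∀ j < m, j ≠ p →
      a j * (if j ∈ C then 1 else 0) < a p * (if p ∈ C then 1 else 0) := by
    intro j hj hjp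
    rw [hpC, mul_one]
    split_ifs with hjC
    · have hlt : v t j < v t p := (le_pickTB _ hC hjC).lt_of_ne (hties j hj p hp hjp)
      simp only [a, mul_one]
      linarith
    · linarith
  exact tendsto_softmaxOn_div_nhdsGT (z := fun j τ => a j * (srState τ v m t).2 j) hp
    (fun j hj => tendsto_const_nhds.mul (hc j hj)) hL hj

lemma tendsto_srState_snd (hties : ∀ t < m, ∀ j < m, ∀ j' < m, j ≠ j' → v t j ≠ v t j') :
    ∀ t ≤ m, ∀ j < m, Tendsto (fun τ => (srState τ v m t).2 j) (𝓝[>] 0)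
      (𝓝 (if j ∈ oneRoundC v m t then 1 else 0))
  | 0, _, j, hj => by
    simp [oneRoundC, srState, mem_range.2 hj]
  | t + 1, ht, j, hj => by
    have ih := tendsto_srState_snd hties t (by omega)
    rw [ite_mem_oneRoundC_succ]
    exact (tendsto_const_nhds.sub
      (tendsto_srState_fst_succ (by omega) (hties t (by omega)) ih hj)).mul (ih j hj)

theorem tendsto_srOut_oneRoundMat
    (hties : ∀ t < m, ∀ j < m, ∀ j' < m, j ≠ j' → v t j ≠ v t j')
    {t j : ℕ} (ht : t < m) (hj : j < m) :
    Tendsto (fun τ => srOut τ v m t j) (𝓝[>] 0) (𝓝 (oneRoundMat v m t j)) :=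
  tendsto_srState_fst_succ ht (hties t ht) (tendsto_srState_snd hties t ht.le) hj

end OneRound

section RoundRobin

variable {v : ℕ → ℕ → ℝ} {n m : ℕ}

lemma rrRem_eq_oneRoundC :
    ∀ t, rrRem v n m t = oneRoundC (fun t => v (t % n)) m t
  | 0 => rfl
  | t + 1 => by rw [rrRem, oneRoundC, rrRem_eq_oneRoundC t]

lemma rrPickAt_eq_pickTB_oneRoundC :
    rrPickAt v n m = fun t => pickTB (v (t % n)) (oneRoundC (fun t => v (t % n)) m t) := by
  funext t
  rw [rrPickAt, rrRem_eq_oneRoundC]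

lemma image_mul_add_range_div {i : ℕ} (hdiv : n ∣ m) (hi : i < n) :
    (range (m / n)).image (fun r => r * n + i) = (range m).filter fun t => t % n = i := by
  obtain ⟨k, rfl⟩ := hdiv
  rw [Nat.mul_div_cancel_left k (by omega)]
  ext t
  simp only [mem_image, mem_range, mem_filter]
  constructor
  · rintro ⟨r, hr, rfl⟩
    refine ⟨by nlinarith, ?_⟩
    rw [Nat.mul_comm, Nat.mul_add_mod, Nat.mod_eq_of_lt hi]
  · rintro ⟨ht, rfl⟩
    exact ⟨t / n, (Nat.div_lt_iff_lt_mul (by omega)).2 (by linarith), Nat.div_add_mod' t n⟩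

lemma sum_ite_eq_of_injOn {ι : Type*} {s : Finset ι} {f : ι → ℕ} (hf : Set.InjOn f s) (j : ℕ) :
    ∑ t ∈ s, (if j = f t then (1 : ℝ) else 0) = if j ∈ s.image f then 1 else 0 := by
  classical
  rw [← sum_image (g := f) (f := fun x => if j = x then (1 : ℝ) else 0) hf, sum_ite_eq]

lemma ite_mem_rrBundle_eq_sum (hdiv : n ∣ m) {i : ℕ} (hi : i < n) (j : ℕ) :
    (if j ∈ rrBundle v n m i then (1 : ℝ) else 0)
      = ∑ r ∈ range (m / n), oneRoundMat (fun t => v (t % n)) m (r * n + i) j := by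
  have hinj : Set.InjOn (fun r => r * n + i) (range (m / n)) := fun a _ b _ hab =>
    Nat.eq_of_mul_eq_mul_right (by omega : 0 < n) (by simpa using hab)
  have hpick : Set.InjOn (rrPickAt v n m) ((range m).filter fun t => t % n = i) := by
    rw [rrPickAt_eq_pickTB_oneRoundC]
    exact pickTB_oneRoundC_injOn.mono fun t ht => mem_range.1 (mem_filter.1 ht).1
  rw [rrBundle, ← sum_ite_eq_of_injOn hpick, ← image_mul_add_range_div hdiv hi, sum_image hinj]
  simp only [oneRoundMat, rrPickAt_eq_pickTB_oneRoundC]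

end RoundRobin

theorem softRR_tendsto_RR (n m : ℕ) (v : ℕ → ℕ → ℝ)
    (hdiv : m % n = 0)
    (hties : ∀ i, i < n → ∀ j, j < m → ∀ j', j' < m → j ≠ j' → v i j ≠ v i j')
    (i : ℕ) (hi : i < n) (j : ℕ) (hj : j < m) :
    Tendsto
      (fun τ : ℝ => ∑ r ∈ Finset.range (m / n), srOut τ (fun i' => v (i' % n)) m (r * n + i) j)
      (nhdsWithin 0 (Set.Ioi 0))
      (nhds (if j ∈ rrBundle v n m i then (1 : ℝ) else 0)) := by
  have hdvd : n ∣ m := Nat.dvd_of_mod_eq_zero hdiv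
  have hstack_ties : ∀ t < m, ∀ j < m, ∀ j' < m, j ≠ j' → v (t % n) j ≠ v (t % n) j' :=
    fun t _ => hties (t % n) (Nat.mod_lt t (by omega))
  have hturn : ∀ r ∈ range (m / n), r * n + i < m := fun r hr => by
    have := (image_mul_add_range_div hdvd hi).subset (mem_image_of_mem _ hr)
    exact mem_range.1 (mem_filter.1 this).1
  rw [ite_mem_rrBundle_eq_sum hdvd hi]
  exact tendsto_finsetSum _ fun r hr => tendsto_srOut_oneRoundMat hstack_ties (hturn r hr) hj
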